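/- For all n1, n2 ∈ S² and every λ > 0, the minimal colloid energies satisfy Ê(n1) ≤ (1 + λ) Ê(n2) + C (1 + λ^{−1}) |n1 − n2|², where C depends only on G (through a fixed cutoff function) and not on n1, n2, λ. -/

import Mathlib

open MeasureTheory Filter Metric Real Asymptotics
open scoped ENNReal NNReal Topology

noncomputable section

/-- Three-dimensional Euclidean space. -/
abbrev E3 : Type := EuclideanSpace ℝ (Fin 3)

/-- `|∇f|²`, the squared Frobenius norm of the gradient of `f`. -/
def gradSq (f : E3 → E3) (x : E3) : ℝ :=
  ∑ i : Fin 3, ‖fderiv ℝ f x (EuclideanSpace.single i (1 : ℝ))‖ ^ 2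

/-- The Dirichlet energy `∫_s |∇f|²`, valued in `[0,∞]`. -/
def eEnergy (s : Set E3) (f : E3 → E3) : ℝ≥0∞ :=
  ∫⁻ x in s, ENNReal.ofReal (gradSq f x)

/-- `f` takes values in the unit sphere `S²` on `s`. -/
def UnitValuedOn (f : E3 → E3) (s : Set E3) : Prop := ∀ x ∈ s, ‖f x‖ = 1

/-- A smooth bounded domain in `ℝ³`: a bounded open set which is the sublevel set of a
smooth function with nonvanishing gradient on the boundary. -/
def SmoothBoundedDomain (G : Set E3) : Prop :=
  IsOpen G ∧ Bornology.IsBounded G ∧ G.Nonempty ∧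
  ∃ f : E3 → ℝ, ContDiff ℝ (⊤ : ℕ∞) f ∧ G = {x : E3 | f x < 0} ∧
    ∀ x ∈ frontier G, fderiv ℝ f x ≠ 0

/-- The total energy `E(n) = ∫_{ℝ³∖G} |∇n|² + F_s(n|_{∂G})`, where the surface energy `Fs`
depends only on the boundary trace (see `TraceInvariant`). -/
def energyC (G : Set E3) (Fs : (E3 → E3) → ℝ≥0∞) (n : E3 → E3) : ℝ≥0∞ :=
  eEnergy Gᶜ n + Fs n

/-- `Fs` is a surface energy: it depends only on the restriction of maps to `∂G`. -/
def TraceInvariant (G : Set E3) (Fs : (E3 → E3) → ℝ≥0∞) : Prop :=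
  ∀ n m : E3 → E3, (∀ x ∈ frontier G, n x = m x) → Fs n = Fs m

/-- The admissible class for the minimization problem defining `Ê(n0)`: `S²`-valued maps on
`ℝ³∖G` with `∫ |n-n0|²/(1+r²) < ∞` and `∫ |∇n|² < ∞`. -/
def AdmissibleC (G : Set E3) (n0 : E3) (n : E3 → E3) : Prop :=
  UnitValuedOn n Gᶜ ∧ (∀ x ∈ (closure G)ᶜ, DifferentiableAt ℝ n x) ∧
  (∫⁻ x in Gᶜ, (‖n x - n0‖₊ : ℝ≥0∞) ^ 2 / (1 + (‖x‖₊ : ℝ≥0∞) ^ 2)) < ⊤ ∧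
  eEnergy Gᶜ n < ⊤

/-- The minimal energy `Ê(n0)` with far-field alignment `n0`. -/
def Ehat (G : Set E3) (Fs : (E3 → E3) → ℝ≥0∞) (n0 : E3) : ℝ≥0∞ :=
  ⨅ (n : E3 → E3) (_ : AdmissibleC G n0 n), energyC G Fs n

/-- `n` is a minimizer achieving `Ê(n0)`. -/
def IsMinimizerC (G : Set E3) (Fs : (E3 → E3) → ℝ≥0∞) (n0 : E3) (n : E3 → E3) : Prop :=
  AdmissibleC G n0 n ∧ energyC G Fs n = Ehat G Fs n0

/-! Let `n` be admissible for the far field `n2` and write `n1 = cos θ • n2 + sin θ • v` with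
`v ⊥ n2` a unit vector and `θ = arccos ⟪n1, n2⟫`. Rotating `n(x)` in the plane of `n2, v` by the
angle `θ χ(x)`, with a fixed cutoff `χ` that vanishes near `closure G` and equals `1` far away,
keeps `|n| = 1` and the trace on `∂G`, and turns the far field into `n1`. Since
`∇(R n) = R ∇n + θ ∇χ ⊗ R' n` with `R` an isometry and `|R' n| ≤ 1`, Young's inequality gives
`|∇(R n)|² ≤ (1 + λ) |∇n|² + (1 + λ⁻¹) θ² |∇χ|²`; integrate, take the infimum over `n`, and use
`θ ≤ π/2 · |n1 - n2|`. -/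

open scoped RealInnerProductSpace

section PlaneRotation

variable {E : Type*} [NormedAddCommGroup E] [InnerProductSpace ℝ E]

def planeProj (u v : E) : E →L[ℝ] E :=
  (innerSL ℝ u).smulRight u + (innerSL ℝ v).smulRight v

def planeQuarterTurn (u v : E) : E →L[ℝ] E :=
  (innerSL ℝ u).smulRight v - (innerSL ℝ v).smulRight u

/-- For orthonormal `u, v`: the rotation by the angle `t` in the plane `span {u, v}`, fixing its
orthogonal complement. -/
def planeRotation (u v : E) (t : ℝ) : E →L[ℝ] E :=
  ContinuousLinearMap.id ℝ E + (cos t - 1) • planeProj u v + sin t • planeQuarterTurn u v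

def planeRotationDeriv (u v : E) (t : ℝ) : E →L[ℝ] E :=
  (-sin t) • planeProj u v + cos t • planeQuarterTurn u v

lemma planeRotation_apply (u v : E) (t : ℝ) (y : E) :
    planeRotation u v t y = y + ((cos t - 1) * ⟪u, y⟫ - sin t * ⟪v, y⟫) • u
      + ((cos t - 1) * ⟪v, y⟫ + sin t * ⟪u, y⟫) • v := by
  simp only [planeRotation, planeProj, planeQuarterTurn, add_apply, smul_apply, sub_apply,
    ContinuousLinearMap.smulRight_apply, innerSL_apply_apply, ContinuousLinearMap.id_apply]
  module

lemma planeRotationDeriv_apply (u v : E) (t : ℝ) (y : E) :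
    planeRotationDeriv u v t y = 0 + (-sin t * ⟪u, y⟫ - cos t * ⟪v, y⟫) • u
      + (-sin t * ⟪v, y⟫ + cos t * ⟪u, y⟫) • v := by
  simp only [planeRotationDeriv, planeProj, planeQuarterTurn, add_apply, smul_apply, sub_apply,
    ContinuousLinearMap.smulRight_apply, innerSL_apply_apply]
  module

lemma hasDerivAt_planeRotation (u v : E) (t : ℝ) :
    HasDerivAt (planeRotation u v) (planeRotationDeriv u v t) t :=
  (((hasDerivAt_cos t).sub_const 1).smul_const (planeProj u v)).const_add _
    |>.add ((hasDerivAt_sin t).smul_const (planeQuarterTurn u v))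

variable {u v : E}

lemma norm_add_smul_add_smul_sq (hu : ‖u‖ = 1) (hv : ‖v‖ = 1) (huv : ⟪u, v⟫ = 0)
    (y : E) (a b : ℝ) :
    ‖y + a • u + b • v‖ ^ 2 = ‖y‖ ^ 2 + a ^ 2 + b ^ 2 + 2 * a * ⟪u, y⟫ + 2 * b * ⟪v, y⟫ := by
  rw [norm_add_sq_real, norm_add_sq_real]
  simp only [inner_add_left, real_inner_smul_left, real_inner_smul_right, norm_smul,
    Real.norm_eq_abs, real_inner_comm y u, real_inner_comm y v, huv, hu, hv, mul_pow, sq_abs]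
  ring

lemma inner_sq_add_inner_sq_le (hu : ‖u‖ = 1) (hv : ‖v‖ = 1) (huv : ⟪u, v⟫ = 0)
    (y : E) : ⟪u, y⟫ ^ 2 + ⟪v, y⟫ ^ 2 ≤ ‖y‖ ^ 2 := by
  have h := norm_add_smul_add_smul_sq hu hv huv y (-⟪u, y⟫) (-⟪v, y⟫)
  nlinarith [sq_nonneg ‖y + -⟪u, y⟫ • u + -⟪v, y⟫ • v‖]

lemma norm_planeRotation_apply (hu : ‖u‖ = 1) (hv : ‖v‖ = 1) (huv : ⟪u, v⟫ = 0)
    (t : ℝ) (y : E) : ‖planeRotation u v t y‖ = ‖y‖ := by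
  refine (sq_eq_sq₀ (norm_nonneg _) (norm_nonneg _)).1 ?_
  rw [planeRotation_apply, norm_add_smul_add_smul_sq hu hv huv]
  linear_combination (⟪u, y⟫ ^ 2 + ⟪v, y⟫ ^ 2) * cos_sq_add_sin_sq t

lemma norm_planeRotationDeriv_apply_le (hu : ‖u‖ = 1) (hv : ‖v‖ = 1) (huv : ⟪u, v⟫ = 0)
    (t : ℝ) (y : E) : ‖planeRotationDeriv u v t y‖ ≤ ‖y‖ := by
  refine (sq_le_sq₀ (norm_nonneg _) (norm_nonneg _)).1 ?_
  rw [planeRotationDeriv_apply, norm_add_smul_add_smul_sq hu hv huv]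
  simp only [norm_zero, inner_zero_right]
  nlinarith [inner_sq_add_inner_sq_le hu hv huv y, cos_sq_add_sin_sq t]

lemma planeRotation_apply_left (hu : ‖u‖ = 1) (huv : ⟪u, v⟫ = 0) (t : ℝ) :
    planeRotation u v t u = cos t • u + sin t • v := by
  rw [planeRotation_apply, real_inner_self_eq_norm_sq, hu, real_inner_comm, huv]
  module

end PlaneRotation

lemma add_sq_le_one_add_mul_sq_add {lam : ℝ} (hlam : 0 < lam) (a b : ℝ) :
    (a + b) ^ 2 ≤ (1 + lam) * a ^ 2 + (1 + lam⁻¹) * b ^ 2 := by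
  have h : (1 + lam) * a ^ 2 + (1 + lam⁻¹) * b ^ 2 - (a + b) ^ 2 = lam⁻¹ * (lam * a - b) ^ 2 := by
    field_simp
    ring
  linarith [show 0 ≤ lam⁻¹ * (lam * a - b) ^ 2 by positivity]

section Cutoff

def cutoff (x : E3) : ℝ := smoothTransition (‖x‖ ^ 2 - 2)

def cutoffGradSq (x : E3) : ℝ :=
  ∑ i : Fin 3, fderiv ℝ cutoff x (EuclideanSpace.single i (1 : ℝ)) ^ 2

lemma contDiff_cutoff : ContDiff ℝ 1 cutoff :=
  smoothTransition.contDiff.comp ((contDiff_norm_sq ℝ).sub contDiff_const)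

lemma differentiable_cutoff : Differentiable ℝ cutoff :=
  contDiff_cutoff.differentiable one_ne_zero

lemma cutoff_of_sq_norm_le {x : E3} (h : ‖x‖ ^ 2 ≤ 2) : cutoff x = 0 :=
  smoothTransition.zero_of_nonpos (by linarith)

lemma cutoff_of_le_sq_norm {x : E3} (h : 3 ≤ ‖x‖ ^ 2) : cutoff x = 1 :=
  smoothTransition.one_of_one_le (by linarith)

lemma cutoffGradSq_nonneg (x : E3) : 0 ≤ cutoffGradSq x :=
  Finset.sum_nonneg fun _ _ => sq_nonneg _

lemma continuous_cutoffGradSq : Continuous cutoffGradSq :=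
  continuous_finsetSum _ fun _ _ =>
    ((contDiff_cutoff.continuous_fderiv one_ne_zero).clm_apply continuous_const).pow 2

lemma cutoffGradSq_of_lt_sq_norm {x : E3} (h : 3 < ‖x‖ ^ 2) : cutoffGradSq x = 0 := by
  have hconst : cutoff =ᶠ[𝓝 x] fun _ => 1 := by
    filter_upwards [(isOpen_lt continuous_const (continuous_norm.pow 2)).mem_nhds h]
      with y hy using cutoff_of_le_sq_norm (le_of_lt hy)
  simp [cutoffGradSq, hconst.fderiv_eq]

lemma lintegral_cutoffGradSq_lt_top : ∫⁻ x, ENNReal.ofReal (cutoffGradSq x) < ⊤ := by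
  refine (continuous_cutoffGradSq.integrable_of_hasCompactSupport ?_).lintegral_lt_top
  refine HasCompactSupport.intro (isCompact_closedBall (0 : E3) 2) fun x hx => ?_
  have : 2 < ‖x‖ := by simpa using hx
  exact cutoffGradSq_of_lt_sq_norm (by nlinarith)

end Cutoff

section RotateFarField

variable {u v : E3} {θ : ℝ} {n : E3 → E3} {x : E3}

/-- The competitor `x ↦ R(θ χ(x)) n(x)` built from a map `n` with far field `u`: it agrees with `n`
near `closure G` and is `n` rotated by `θ` in the plane of `u, v` far away. -/
def rotateFarField (u v : E3) (θ : ℝ) (n : E3 → E3) (x : E3) : E3 :=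
  planeRotation u v (θ * cutoff x) (n x)

lemma rotateFarField_of_sq_norm_le (h : ‖x‖ ^ 2 ≤ 2) : rotateFarField u v θ n x = n x := by
  simp [rotateFarField, cutoff_of_sq_norm_le h, planeRotation]

lemma rotateFarField_eventuallyEq (h : ‖x‖ ^ 2 < 2) : rotateFarField u v θ n =ᶠ[𝓝 x] n := by
  filter_upwards [(isOpen_lt (continuous_norm.pow 2) continuous_const).mem_nhds h] with y hy
    using rotateFarField_of_sq_norm_le hy.le

lemma hasFDerivAt_rotateFarField (hn : DifferentiableAt ℝ n x) :
    HasFDerivAt (rotateFarField u v θ n)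
      ((planeRotation u v (θ * cutoff x)).comp (fderiv ℝ n x)
        + (fderiv ℝ cutoff x).smulRight (θ • planeRotationDeriv u v (θ * cutoff x) (n x))) x := by
  have hrot := (hasDerivAt_planeRotation u v (θ * cutoff x)).hasFDerivAt.comp x
    ((differentiable_cutoff x).hasFDerivAt.const_mul θ)
  refine (hrot.clm_apply hn.hasFDerivAt).congr_fderiv ?_
  ext e
  simp [smul_comm θ]

lemma fderiv_rotateFarField_apply (hn : DifferentiableAt ℝ n x) (e : E3) :
    fderiv ℝ (rotateFarField u v θ n) x e
      = planeRotation u v (θ * cutoff x) (fderiv ℝ n x e)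
        + (θ * fderiv ℝ cutoff x e) • planeRotationDeriv u v (θ * cutoff x) (n x) := by
  simp [(hasFDerivAt_rotateFarField hn).fderiv, mul_smul, smul_comm θ]

lemma norm_rotateFarField (hu : ‖u‖ = 1) (hv : ‖v‖ = 1) (huv : ⟪u, v⟫ = 0) :
    ‖rotateFarField u v θ n x‖ = ‖n x‖ :=
  norm_planeRotation_apply hu hv huv _ _

lemma norm_fderiv_rotateFarField_apply_le (hu : ‖u‖ = 1) (hv : ‖v‖ = 1) (huv : ⟪u, v⟫ = 0)
    (hn : DifferentiableAt ℝ n x) (hnx : ‖n x‖ = 1) (e : E3) :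
    ‖fderiv ℝ (rotateFarField u v θ n) x e‖ ≤ ‖fderiv ℝ n x e‖ + |θ| * |fderiv ℝ cutoff x e| := by
  rw [fderiv_rotateFarField_apply hn]
  refine (norm_add_le _ _).trans (add_le_add (norm_planeRotation_apply hu hv huv _ _).le ?_)
  calc ‖(θ * fderiv ℝ cutoff x e) • planeRotationDeriv u v (θ * cutoff x) (n x)‖
      ≤ |θ * fderiv ℝ cutoff x e| * ‖n x‖ := by
        rw [norm_smul, Real.norm_eq_abs]
        gcongr
        exact norm_planeRotationDeriv_apply_le hu hv huv _ _
    _ = |θ| * |fderiv ℝ cutoff x e| := by rw [hnx, mul_one, abs_mul]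

lemma gradSq_rotateFarField_le (hu : ‖u‖ = 1) (hv : ‖v‖ = 1) (huv : ⟪u, v⟫ = 0)
    {lam : ℝ} (hlam : 0 < lam) (hn : DifferentiableAt ℝ n x) (hnx : ‖n x‖ = 1) :
    gradSq (rotateFarField u v θ n) x
      ≤ (1 + lam) * gradSq n x + (1 + lam⁻¹) * θ ^ 2 * cutoffGradSq x := by
  simp only [gradSq, cutoffGradSq, Finset.mul_sum, ← Finset.sum_add_distrib]
  refine Finset.sum_le_sum fun i _ => ?_
  set e : E3 := EuclideanSpace.single i 1
  calc ‖fderiv ℝ (rotateFarField u v θ n) x e‖ ^ 2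
      ≤ (‖fderiv ℝ n x e‖ + |θ| * |fderiv ℝ cutoff x e|) ^ 2 := by
        gcongr
        exact norm_fderiv_rotateFarField_apply_le hu hv huv hn hnx e
    _ ≤ (1 + lam) * ‖fderiv ℝ n x e‖ ^ 2 + (1 + lam⁻¹) * (|θ| * |fderiv ℝ cutoff x e|) ^ 2 :=
        add_sq_le_one_add_mul_sq_add hlam _ _
    _ = _ := by rw [mul_pow, sq_abs, sq_abs]; ring

lemma norm_rotateFarField_sub_of_le_sq_norm (hu : ‖u‖ = 1) (hv : ‖v‖ = 1) (huv : ⟪u, v⟫ = 0)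
    (h : 3 ≤ ‖x‖ ^ 2) :
    ‖rotateFarField u v θ n x - (cos θ • u + sin θ • v)‖ = ‖n x - u‖ := by
  rw [rotateFarField, cutoff_of_le_sq_norm h, mul_one, ← planeRotation_apply_left hu huv,
    ← map_sub, norm_planeRotation_apply hu hv huv]

end RotateFarField

section Energy

lemma gradSq_nonneg (f : E3 → E3) (x : E3) : 0 ≤ gradSq f x :=
  Finset.sum_nonneg fun _ _ => sq_nonneg _

@[fun_prop]
lemma measurable_gradSq (f : E3 → E3) : Measurable (gradSq f) :=
  Finset.measurable_sum _ fun _ _ => (measurable_fderiv_apply_const ℝ f _).norm.pow_const 2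

lemma eEnergy_le_of_gradSq_le {s : Set E3} {m n : E3 → E3} {K : E3 → ℝ} {a b : ℝ}
    (ha : 0 ≤ a) (hb : 0 ≤ b) (hK : Measurable K)
    (h : ∀ x ∈ s, gradSq m x ≤ a * gradSq n x + b * K x) :
    eEnergy s m ≤ ENNReal.ofReal a * eEnergy s n + ENNReal.ofReal b * ∫⁻ x, ENNReal.ofReal (K x) :=
  calc eEnergy s m
      ≤ ∫⁻ x in s, (ENNReal.ofReal a * ENNReal.ofReal (gradSq n x)
          + ENNReal.ofReal b * ENNReal.ofReal (K x)) := by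
        refine setLIntegral_mono (by fun_prop) fun x hx => ?_
        rw [← ENNReal.ofReal_mul ha, ← ENNReal.ofReal_mul hb]
        exact (ENNReal.ofReal_le_ofReal (h x hx)).trans ENNReal.ofReal_add_le
    _ = ENNReal.ofReal a * eEnergy s n + ENNReal.ofReal b * ∫⁻ x in s, ENNReal.ofReal (K x) := by
        rw [lintegral_add_left (by fun_prop), lintegral_const_mul' _ _ ENNReal.ofReal_ne_top,
          lintegral_const_mul' _ _ ENNReal.ofReal_ne_top, eEnergy]
    _ ≤ _ := add_le_add le_rfl (mul_le_mul_right (setLIntegral_le_lintegral _ _) _)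

lemma lintegral_weighted_lt_top_of_norm_le {s : Set E3} {f g : E3 → E3} {R M : ℝ}
    (hs : MeasurableSet s) (hbdd : ∀ x ∈ s, ‖f x‖ ≤ M) (hfar : ∀ x ∈ s, R ≤ ‖x‖ → ‖f x‖ ≤ ‖g x‖)
    (hg : ∫⁻ x in s, (‖g x‖₊ : ℝ≥0∞) ^ 2 / (1 + (‖x‖₊ : ℝ≥0∞) ^ 2) < ⊤) :
    ∫⁻ x in s, (‖f x‖₊ : ℝ≥0∞) ^ 2 / (1 + (‖x‖₊ : ℝ≥0∞) ^ 2) < ⊤ := by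
  have hpt : ∀ x ∈ s, (‖f x‖₊ : ℝ≥0∞) ^ 2 / (1 + (‖x‖₊ : ℝ≥0∞) ^ 2)
      ≤ (ball (0 : E3) R).indicator (fun _ => ENNReal.ofReal M ^ 2) x
        + (‖g x‖₊ : ℝ≥0∞) ^ 2 / (1 + (‖x‖₊ : ℝ≥0∞) ^ 2) := by
    intro x hx
    by_cases hxR : ‖x‖ < R
    · refine le_add_right ?_
      rw [Set.indicator_of_mem (by simpa using hxR)]
      calc (‖f x‖₊ : ℝ≥0∞) ^ 2 / (1 + (‖x‖₊ : ℝ≥0∞) ^ 2) ≤ (‖f x‖₊ : ℝ≥0∞) ^ 2 :=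
            ENNReal.div_le_of_le_mul (le_mul_of_one_le_right' le_self_add)
        _ ≤ ENNReal.ofReal M ^ 2 := by
            gcongr
            exact (ofReal_norm (f x)).ge.trans (ENNReal.ofReal_le_ofReal (hbdd x hx))
    · refine le_add_left ?_
      gcongr
      exact_mod_cast hfar x hx (not_lt.1 hxR)
  calc ∫⁻ x in s, (‖f x‖₊ : ℝ≥0∞) ^ 2 / (1 + (‖x‖₊ : ℝ≥0∞) ^ 2)
      ≤ ∫⁻ x in s, ((ball (0 : E3) R).indicator (fun _ => ENNReal.ofReal M ^ 2) x
          + (‖g x‖₊ : ℝ≥0∞) ^ 2 / (1 + (‖x‖₊ : ℝ≥0∞) ^ 2)) := setLIntegral_mono' hs hpt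
    _ = _ := lintegral_add_left (measurable_const.indicator measurableSet_ball) _
    _ < ⊤ := by
        refine ENNReal.add_lt_top.2 ⟨?_, hg⟩
        calc _ ≤ ∫⁻ x, (ball (0 : E3) R).indicator (fun _ => ENNReal.ofReal M ^ 2) x :=
              setLIntegral_le_lintegral _ _
          _ = ENNReal.ofReal M ^ 2 * volume (ball (0 : E3) R) := by
              rw [lintegral_indicator measurableSet_ball, setLIntegral_const]
          _ < ⊤ := ENNReal.mul_lt_top (by simp) measure_ball_lt_top

end Energy

section FarFieldRotation

variable {G : Set E3} {u v : E3} {θ lam : ℝ} {n : E3 → E3}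

lemma sq_norm_lt_two_of_mem_closure (hG1 : G ⊆ ball (0 : E3) 1) {x : E3} (hx : x ∈ closure G) :
    ‖x‖ ^ 2 < 2 := by
  have : ‖x‖ ≤ 1 := by simpa using closure_ball_subset_closedBall (closure_mono hG1 hx)
  nlinarith [norm_nonneg x]

lemma gradSq_rotateFarField_le_of_admissibleC (hG1 : G ⊆ ball (0 : E3) 1) (hu : ‖u‖ = 1)
    (hv : ‖v‖ = 1) (huv : ⟪u, v⟫ = 0) (hlam : 0 < lam) (hn : AdmissibleC G u n) {x : E3}
    (hx : x ∈ Gᶜ) :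
    gradSq (rotateFarField u v θ n) x
      ≤ (1 + lam) * gradSq n x + (1 + lam⁻¹) * θ ^ 2 * cutoffGradSq x := by
  by_cases hx2 : ‖x‖ ^ 2 < 2
  · rw [gradSq, (rotateFarField_eventuallyEq hx2).fderiv_eq, ← gradSq]
    exact le_add_of_le_of_nonneg (le_mul_of_one_le_left (gradSq_nonneg n x) (by linarith))
      (mul_nonneg (by positivity) (cutoffGradSq_nonneg x))
  · exact gradSq_rotateFarField_le hu hv huv hlam
      (hn.2.1 x fun hc => hx2 (sq_norm_lt_two_of_mem_closure hG1 hc)) (hn.1 x hx)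

lemma eEnergy_rotateFarField_le (hG1 : G ⊆ ball (0 : E3) 1) (hu : ‖u‖ = 1) (hv : ‖v‖ = 1)
    (huv : ⟪u, v⟫ = 0) (hlam : 0 < lam) (hn : AdmissibleC G u n) :
    eEnergy Gᶜ (rotateFarField u v θ n)
      ≤ ENNReal.ofReal (1 + lam) * eEnergy Gᶜ n
        + ENNReal.ofReal ((1 + lam⁻¹) * θ ^ 2) * ∫⁻ x, ENNReal.ofReal (cutoffGradSq x) :=
  eEnergy_le_of_gradSq_le (by positivity) (by positivity) continuous_cutoffGradSq.measurable
    fun _ hx => gradSq_rotateFarField_le_of_admissibleC hG1 hu hv huv hlam hn hx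

lemma admissibleC_rotateFarField (hG : IsOpen G) (hG1 : G ⊆ ball (0 : E3) 1) (hu : ‖u‖ = 1)
    (hv : ‖v‖ = 1) (huv : ⟪u, v⟫ = 0) (hn : AdmissibleC G u n) :
    AdmissibleC G (cos θ • u + sin θ • v) (rotateFarField u v θ n) := by
  obtain ⟨hunit, hdiff, hweight, henergy⟩ := hn
  have hmunit : UnitValuedOn (rotateFarField u v θ n) Gᶜ := fun x hx =>
    (norm_rotateFarField hu hv huv).trans (hunit x hx)
  refine ⟨hmunit, fun x hx => (hasFDerivAt_rotateFarField (hdiff x hx)).differentiableAt,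
    ?_, ?_⟩
  · refine lintegral_weighted_lt_top_of_norm_le (R := 2) (M := 2) hG.measurableSet.compl
      (fun x hx => ?_) (fun x _ hx => ?_) hweight
    · calc _ ≤ ‖rotateFarField u v θ n x‖ + ‖cos θ • u + sin θ • v‖ := norm_sub_le _ _
        _ = 2 := by
          rw [hmunit x hx, ← planeRotation_apply_left hu huv,
            norm_planeRotation_apply hu hv huv, hu, one_add_one_eq_two]
    · exact (norm_rotateFarField_sub_of_le_sq_norm hu hv huv (by nlinarith)).le
  · calc eEnergy Gᶜ (rotateFarField u v θ n)
        ≤ ENNReal.ofReal (1 + 1) * eEnergy Gᶜ n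
          + ENNReal.ofReal ((1 + 1⁻¹) * θ ^ 2) * ∫⁻ x, ENNReal.ofReal (cutoffGradSq x) :=
          eEnergy_rotateFarField_le hG1 hu hv huv one_pos ⟨hunit, hdiff, hweight, henergy⟩
      _ < ⊤ := by
          have := lintegral_cutoffGradSq_lt_top
          finiteness

lemma energyC_rotateFarField_le {Fs : (E3 → E3) → ℝ≥0∞} (hFs : TraceInvariant G Fs)
    (hG1 : G ⊆ ball (0 : E3) 1) (hu : ‖u‖ = 1) (hv : ‖v‖ = 1) (huv : ⟪u, v⟫ = 0)
    (hlam : 0 < lam) (hn : AdmissibleC G u n) :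
    energyC G Fs (rotateFarField u v θ n)
      ≤ ENNReal.ofReal (1 + lam) * energyC G Fs n
        + ENNReal.ofReal ((1 + lam⁻¹) * θ ^ 2) * ∫⁻ x, ENNReal.ofReal (cutoffGradSq x) := by
  have htrace : Fs (rotateFarField u v θ n) = Fs n := hFs _ _ fun x hx =>
    rotateFarField_of_sq_norm_le (sq_norm_lt_two_of_mem_closure hG1 (frontier_subset_closure hx)).le
  have hFs_le : Fs n ≤ ENNReal.ofReal (1 + lam) * Fs n :=
    le_mul_of_one_le_left' (ENNReal.one_le_ofReal.2 (by linarith))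
  rw [energyC, energyC, htrace, mul_add]
  calc _ ≤ ENNReal.ofReal (1 + lam) * eEnergy Gᶜ n
          + ENNReal.ofReal ((1 + lam⁻¹) * θ ^ 2) * (∫⁻ x, ENNReal.ofReal (cutoffGradSq x))
          + ENNReal.ofReal (1 + lam) * Fs n :=
        add_le_add (eEnergy_rotateFarField_le hG1 hu hv huv hlam hn) hFs_le
    _ = _ := add_right_comm _ _ _

lemma Ehat_le_of_forall_admissibleC {Fs : (E3 → E3) → ℝ≥0∞} {n1 n2 : E3} {A B : ℝ≥0∞}
    (hA0 : A ≠ 0) (hA : A ≠ ⊤)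
    (h : ∀ n, AdmissibleC G n2 n → Ehat G Fs n1 ≤ A * energyC G Fs n + B) :
    Ehat G Fs n1 ≤ A * Ehat G Fs n2 + B :=
  calc Ehat G Fs n1 ≤ ⨅ (n) (_ : AdmissibleC G n2 n), (A * energyC G Fs n + B) := le_iInf₂ h
    _ = A * Ehat G Fs n2 + B := by
      simp only [Ehat, ENNReal.mul_iInf_of_ne hA0 hA, ENNReal.iInf_add]

lemma Ehat_cos_smul_add_sin_smul_le {Fs : (E3 → E3) → ℝ≥0∞} (hFs : TraceInvariant G Fs)
    (hG : IsOpen G) (hG1 : G ⊆ ball (0 : E3) 1) (hu : ‖u‖ = 1) (hv : ‖v‖ = 1)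
    (huv : ⟪u, v⟫ = 0) (θ : ℝ) (hlam : 0 < lam) :
    Ehat G Fs (cos θ • u + sin θ • v)
      ≤ ENNReal.ofReal (1 + lam) * Ehat G Fs u
        + ENNReal.ofReal ((1 + lam⁻¹) * θ ^ 2) * ∫⁻ x, ENNReal.ofReal (cutoffGradSq x) :=
  Ehat_le_of_forall_admissibleC (ENNReal.ofReal_pos.2 (by linarith)).ne' ENNReal.ofReal_ne_top
    fun n hn => (iInf₂_le _ (admissibleC_rotateFarField hG hG1 hu hv huv hn)).trans
      (energyC_rotateFarField_le hFs hG1 hu hv huv hlam hn)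

end FarFieldRotation

section Angle

variable {E : Type*} [NormedAddCommGroup E] [InnerProductSpace ℝ E]

lemma exists_norm_eq_one_inner_eq_zero [FiniteDimensional ℝ E] (hE : 2 ≤ Module.finrank ℝ E)
    (w : E) : ∃ v : E, ‖v‖ = 1 ∧ ⟪w, v⟫ = 0 := by
  have hspan : Module.finrank ℝ (ℝ ∙ w) ≤ 1 := by
    simpa using finrank_span_le_card ({w} : Set E)
  have hsum := Submodule.finrank_add_finrank_orthogonal (ℝ ∙ w)
  have hne : (ℝ ∙ w)ᗮ ≠ ⊥ := by
    intro h
    rw [h, finrank_bot] at hsum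
    omega
  obtain ⟨y, hy, hy0⟩ := Submodule.exists_mem_ne_zero_of_ne_bot hne
  refine ⟨‖y‖⁻¹ • y, norm_smul_inv_norm hy0, ?_⟩
  rw [real_inner_smul_right, Submodule.mem_orthogonal_singleton_iff_inner_right.1 hy, mul_zero]

lemma abs_real_inner_le_one {n1 n2 : E} (h1 : ‖n1‖ = 1) (h2 : ‖n2‖ = 1) : |⟪n1, n2⟫| ≤ 1 := by
  simpa [h1, h2] using abs_real_inner_le_norm n1 n2

lemma exists_eq_cos_smul_add_sin_smul [FiniteDimensional ℝ E] (hE : 2 ≤ Module.finrank ℝ E)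
    {n1 n2 : E} (h1 : ‖n1‖ = 1) (h2 : ‖n2‖ = 1) :
    ∃ v : E, ‖v‖ = 1 ∧ ⟪n2, v⟫ = 0 ∧
      n1 = cos (arccos ⟪n1, n2⟫) • n2 + sin (arccos ⟪n1, n2⟫) • v := by
  set c := ⟪n1, n2⟫ with hc
  obtain ⟨hc1, hc2⟩ := abs_le.1 (abs_real_inner_le_one h1 h2)
  set w := n1 - c • n2 with hw
  have hn2w : ⟪n2, w⟫ = 0 := by
    rw [hw, inner_sub_right, real_inner_smul_right, real_inner_self_eq_norm_sq, h2,
      real_inner_comm]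
    ring
  have hnormw : ‖w‖ = √(1 - c ^ 2) := by
    rw [← Real.sqrt_sq (norm_nonneg w), hw, norm_sub_sq_real, real_inner_smul_right, norm_smul,
      h1, h2, ← hc, Real.norm_eq_abs]
    congr 1
    rw [mul_one, sq_abs]
    ring
  obtain ⟨v, hv, hn2v, hwv⟩ : ∃ v : E, ‖v‖ = 1 ∧ ⟪n2, v⟫ = 0 ∧ w = ‖w‖ • v := by
    by_cases hw0 : w = 0
    · obtain ⟨v, hv, hn2v⟩ := exists_norm_eq_one_inner_eq_zero hE n2
      exact ⟨v, hv, hn2v, by simp [hw0]⟩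
    · refine ⟨‖w‖⁻¹ • w, norm_smul_inv_norm hw0, ?_, ?_⟩
      · rw [real_inner_smul_right, hn2w, mul_zero]
      · rw [smul_smul, mul_inv_cancel₀ (norm_ne_zero_iff.2 hw0), one_smul]
  refine ⟨v, hv, hn2v, ?_⟩
  rw [cos_arccos hc1 hc2, sin_arccos, ← hnormw, ← hwv, hw]
  abel

lemma sq_arccos_inner_le {n1 n2 : E} (h1 : ‖n1‖ = 1) (h2 : ‖n2‖ = 1) :
    arccos ⟪n1, n2⟫ ^ 2 ≤ π ^ 2 / 4 * ‖n1 - n2‖ ^ 2 := by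
  set θ := arccos ⟪n1, n2⟫
  obtain ⟨hc1, hc2⟩ := abs_le.1 (abs_real_inner_le_one h1 h2)
  have hcos := cos_le_one_sub_mul_cos_sq (x := θ)
    (abs_le.2 ⟨by linarith [arccos_nonneg ⟪n1, n2⟫, pi_pos], arccos_le_pi _⟩)
  rw [cos_arccos hc1 hc2] at hcos
  rw [norm_sub_sq_real, h1, h2]
  calc θ ^ 2 = π ^ 2 / 2 * (2 / π ^ 2 * θ ^ 2) := by field_simp
    _ ≤ π ^ 2 / 2 * (1 - ⟪n1, n2⟫) := by gcongr; linarith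
    _ = _ := by ring

end Angle

/-- **Almost-monotonicity of the minimal energy under rotation of the far field
(Step 1 of the proof of Theorem 1.4):** for all `n1, n2 ∈ S²` and every `λ > 0`,
`Ê(n1) ≤ (1 + λ) Ê(n2) + C (1 + λ⁻¹) |n1 − n2|²`, where `C` depends only on `G`
(through a fixed cutoff function) and not on `F_s`, `n1`, `n2`, `λ`. -/
theorem Ehat_almost_monotone (G : Set E3) (hG : SmoothBoundedDomain G)
    (hG1 : G ⊆ Metric.ball (0 : E3) 1) :
    ∃ C : ℝ, 0 < C ∧
      ∀ Fs : (E3 → E3) → ℝ≥0∞, TraceInvariant G Fs →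
        ∀ n1 n2 : E3, ‖n1‖ = 1 → ‖n2‖ = 1 → ∀ lam : ℝ, 0 < lam →
          Ehat G Fs n1
            ≤ ENNReal.ofReal (1 + lam) * Ehat G Fs n2
              + ENNReal.ofReal (C * (1 + lam⁻¹) * ‖n1 - n2‖ ^ 2) := by
  set L := ∫⁻ x, ENNReal.ofReal (cutoffGradSq x)
  set C0 := L.toReal
  have hL : L = ENNReal.ofReal C0 := (ENNReal.ofReal_toReal lintegral_cutoffGradSq_lt_top.ne).symm
  refine ⟨π ^ 2 / 4 * C0 + 1, by positivity, fun Fs hFs n1 n2 h1 h2 lam hlam => ?_⟩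
  obtain ⟨v, hv, hn2v, hn1⟩ := exists_eq_cos_smul_add_sin_smul (by simp) h1 h2
  set θ := arccos ⟪n1, n2⟫
  have hθ : θ ^ 2 ≤ π ^ 2 / 4 * ‖n1 - n2‖ ^ 2 := sq_arccos_inner_le h1 h2
  calc Ehat G Fs n1
      ≤ ENNReal.ofReal (1 + lam) * Ehat G Fs n2 + ENNReal.ofReal ((1 + lam⁻¹) * θ ^ 2) * L :=
        (congrArg (Ehat G Fs) hn1).trans_le
          (Ehat_cos_smul_add_sin_smul_le hFs hG.1 hG1 h2 hv hn2v θ hlam)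
    _ ≤ _ := by
        gcongr
        rw [hL, ← ENNReal.ofReal_mul (by positivity)]
        refine ENNReal.ofReal_le_ofReal ?_
        have hC0 : 0 ≤ C0 := ENNReal.toReal_nonneg
        have hlam' : 0 ≤ 1 + lam⁻¹ := by positivity
        nlinarith [mul_le_mul_of_nonneg_left hθ (mul_nonneg hlam' hC0),
          mul_nonneg hlam' (sq_nonneg ‖n1 - n2‖)]

end
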